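/- Let N ≥ 2, α > 0, and let l, l′ be real numbers with l > l′ > −N − α. If a measurable set M ⊂ ℝ^N_+ with 0 < μ_{l,α}(M) < +∞ satisfies μ_{l′,α}(M) = μ_{l′,α}(M⋆), where M⋆ = B_{R⋆}^+ is the half-ball with μ_{l,α}(M⋆) = μ_{l,α}(M), then μ_{l,α}(M Δ M⋆) = 0, i.e. M coincides with the half-ball M⋆ up to a set of μ_{l,α}-measure zero. -/
import Mathlib


open MeasureTheory ENNReal Set Filter
open scoped Topology NNReal

noncomputable section

abbrev Euc (N : ℕ) := EuclideanSpace ℝ (Fin N)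

/-- The last coordinate `x_N` of a point of `ℝ^N`. -/
def lastCoord (N : ℕ) (x : Euc N) : ℝ := if h : 0 < N then x ⟨N - 1, by omega⟩ else 0

/-- The open upper half-space `ℝ^N_+ = {x : x_N > 0}`. -/
def upperHalf (N : ℕ) : Set (Euc N) := {x | 0 < lastCoord N x}

/-- The open half-ball `B_R^+ = {x : |x| < R, x_N > 0}`. -/
def halfBall (N : ℕ) (R : ℝ) : Set (Euc N) := {x | ‖x‖ < R ∧ 0 < lastCoord N x}

/-- The weight `|x|^k x_N^α`. -/
def wt (N : ℕ) (k α : ℝ) (x : Euc N) : ℝ := ‖x‖ ^ k * lastCoord N x ^ α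

/-- The weighted measure `μ_{l,α}(M) = ∫_M |x|^l x_N^α dx` of a set `M ⊆ ℝ^N_+`. -/
def wMeas (N : ℕ) (l α : ℝ) (M : Set (Euc N)) : ℝ≥0∞ :=
  ∫⁻ x in M, ENNReal.ofReal (wt N l α x)

/-- The divergence of a vector field on `ℝ^N`. -/
def vdiv (N : ℕ) (F : Euc N → Euc N) (x : Euc N) : ℝ :=
  ∑ i, fderiv ℝ F x (EuclideanSpace.single i 1) i

/-- The weighted perimeter `P_{μ_{k,α}}(M)`. -/
def wPerim (N : ℕ) (k α : ℝ) (M : Set (Euc N)) : ℝ≥0∞ :=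
  ⨆ v : {v : Euc N → Euc N // ContDiff ℝ 1 v ∧ HasCompactSupport v ∧ ∀ x ∈ M, ‖v x‖ ≤ 1},
    ENNReal.ofReal (∫ x in M, vdiv N (fun y => wt N k α y • v.1 y) x)

/-- A bounded open set with smooth boundary. -/
def IsSmoothBoundedDomain (N : ℕ) (Ω : Set (Euc N)) : Prop :=
  IsOpen Ω ∧ Bornology.IsBounded Ω ∧
    ∃ f : Euc N → ℝ, ContDiff ℝ (⊤ : ℕ∞) f ∧ Ω = {x | f x < 0} ∧ frontier Ω = {x | f x = 0} ∧
      ∀ x ∈ frontier Ω, fderiv ℝ f x ≠ 0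

/-- The Beta function `B(a,b) = Γ(a)Γ(b)/Γ(a+b)`. -/
def betaFn (a b : ℝ) : ℝ := Real.Gamma a * Real.Gamma b / Real.Gamma (a + b)

/-- The explicit isoperimetric constant `C^{rad}_{k,l,N,α}`. -/
def Crad (N : ℕ) (k l α : ℝ) : ℝ :=
  (l + α + N) ^ ((k + N + α - 1) / (l + N + α)) *
    (betaFn (((N : ℝ) - 1) / 2) ((α + 1) / 2) * Real.pi ^ (((N : ℝ) - 1) / 2) /
        Real.Gamma (((N : ℝ) - 1) / 2)) ^ ((l - k + 1) / (l + N + α))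

/-- The exponent in the isoperimetric inequality. -/
def isoExp (N : ℕ) (k l α : ℝ) : ℝ := (k + N + α - 1) / (l + N + α)

/-- Distribution function of `u` on `Ω` relative to `μ_{m,α}`. -/
def distFn (N : ℕ) (m α : ℝ) (Ω : Set (Euc N)) (u : Euc N → ℝ) (t : ℝ) : ℝ≥0∞ :=
  wMeas N m α {x ∈ Ω | t < |u x|}

/-- Weighted decreasing rearrangement `u*`. -/
def rearr (N : ℕ) (m α : ℝ) (Ω : Set (Euc N)) (u : Euc N → ℝ) (s : ℝ≥0∞) : ℝ :=
  sSup {t : ℝ | 0 ≤ t ∧ s < distFn N m α Ω u t}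

/-- Weighted Schwarz symmetrization `u⋆(x) = u*(μ_{m,α}(B^+_{|x|}))`. -/
def symmFn (N : ℕ) (m α : ℝ) (Ω : Set (Euc N)) (u : Euc N → ℝ) (x : Euc N) : ℝ :=
  rearr N m α Ω u (wMeas N m α (halfBall N ‖x‖))

/-- `X`: C¹ functions on `Ω̄` vanishing near `∂Ω \ {x_N = 0}`. -/
def TestFn (N : ℕ) (Ω : Set (Euc N)) (v : Euc N → ℝ) : Prop :=
  ContDiff ℝ 1 v ∧ ∃ U : Set (Euc N), IsOpen U ∧ frontier Ω \ {x | lastCoord N x = 0} ⊆ U ∧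
    ∀ x ∈ U, v x = 0

/-- `u ∈ V²(Ω, dμ_{m,α})` with weak gradient `g`. -/
def MemV2 (N : ℕ) (m α : ℝ) (Ω : Set (Euc N)) (u : Euc N → ℝ) (g : Euc N → Euc N) : Prop :=
  (∀ φ : Euc N → ℝ, ContDiff ℝ (⊤ : ℕ∞) φ → HasCompactSupport φ → tsupport φ ⊆ Ω → ∀ i : Fin N,
      ∫ x in Ω, u x * fderiv ℝ φ x (EuclideanSpace.single i 1) = -∫ x in Ω, g x i * φ x) ∧
  (∫⁻ x in Ω, ENNReal.ofReal (u x ^ 2 * wt N m α x)) < ⊤ ∧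
  (∫⁻ x in Ω, ENNReal.ofReal (‖g x‖ ^ 2 * wt N m α x)) < ⊤ ∧
  ∃ v : ℕ → Euc N → ℝ, (∀ n, TestFn N Ω (v n)) ∧
    Tendsto (fun n => ∫⁻ x in Ω, ENNReal.ofReal ((v n x - u x) ^ 2 * wt N m α x)) atTop (𝓝 0) ∧
    Tendsto (fun n => ∫⁻ x in Ω, ENNReal.ofReal (‖gradient (v n) x - g x‖ ^ 2 * wt N m α x))
      atTop (𝓝 0)

/-- Ellipticity condition. -/
def Elliptic (N : ℕ) (m α : ℝ) (Ω : Set (Euc N)) (A : Euc N → Matrix (Fin N) (Fin N) ℝ)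
    (Λ : ℝ) : Prop :=
  (∀ x, (A x).IsSymm) ∧ (∀ i j, Measurable fun x => A x i j) ∧
    ∀ᵐ x ∂(volume.restrict Ω), ∀ ζ : Euc N,
      wt N m α x * ‖ζ‖ ^ 2 ≤ ∑ i, ∑ j, A x i j * ζ i * ζ j ∧
      ∑ i, ∑ j, A x i j * ζ i * ζ j ≤ Λ * (wt N m α x * ‖ζ‖ ^ 2)

/-- Weak solution of the mixed boundary value problem. -/
def IsWeakSol (N : ℕ) (m α : ℝ) (Ω : Set (Euc N)) (A : Euc N → Matrix (Fin N) (Fin N) ℝ)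
    (f : Euc N → ℝ) (u : Euc N → ℝ) (g : Euc N → Euc N) : Prop :=
  MemV2 N m α Ω u g ∧
    ∀ φ : Euc N → ℝ, ContDiff ℝ 1 φ → (∀ x ∈ frontier Ω \ {x | lastCoord N x = 0}, φ x = 0) →
      ∫ x in Ω, ∑ i, ∑ j, A x i j * g x j * fderiv ℝ φ x (EuclideanSpace.single i 1)
        = ∫ x in Ω, f x * φ x * wt N m α x

/-- The explicit radial solution of the symmetrized problem. -/
def wSol (N : ℕ) (m α : ℝ) (Ω : Set (Euc N)) (f : Euc N → ℝ) (rstar : ℝ) (x : Euc N) : ℝ :=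
  ∫ ρ in (‖x‖)..rstar,
    (∫ σ in (0:ℝ)..ρ, rearr N m α Ω f (wMeas N m α (halfBall N σ)) * σ ^ ((N : ℝ) - 1 + m + α)) *
      ρ ^ (1 - (N : ℝ) - m - α)

-- aux lemmas
lemma abs_lastCoord_le_norm {N : ℕ} (x : Euc N) : |lastCoord N x| ≤ ‖x‖ := by
  unfold lastCoord
  split
  · rw [show |x ⟨N-1, by omega⟩| = Real.sqrt (|x ⟨N-1, by omega⟩|^2) by
      rw [Real.sqrt_sq_eq_abs, abs_abs]]
    rw [EuclideanSpace.norm_eq]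
    exact Real.sqrt_le_sqrt <| Finset.single_le_sum
      (f := fun j => ‖x j‖^2) (fun j _ => sq_nonneg _) (Finset.mem_univ _)
  · simpa using norm_nonneg x

lemma continuous_lastCoord (N : ℕ) : Continuous (lastCoord N) := by
  by_cases h : 0 < N
  · have e : lastCoord N = fun x : Euc N => x ⟨N-1, by omega⟩ := by
      funext x; exact dif_pos h
    rw [e]
    exact (EuclideanSpace.proj (𝕜 := ℝ) (⟨N-1, by omega⟩ : Fin N)).continuous
  · have e : lastCoord N = fun _ : Euc N => (0:ℝ) := by
      funext x; exact dif_neg h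
    rw [e]; exact continuous_const

lemma measurable_wtE (N : ℕ) (k α : ℝ) :
    Measurable fun x : Euc N => ENNReal.ofReal (wt N k α x) := by
  have h1 : Measurable (lastCoord N) := (continuous_lastCoord N).measurable
  unfold wt; fun_prop

lemma measurableSet_halfBall (N : ℕ) (R : ℝ) : MeasurableSet (halfBall N R) := by
  have : halfBall N R = {x : Euc N | ‖x‖ < R} ∩ {x | 0 < lastCoord N x} := rfl
  rw [this]
  exact ((isOpen_lt continuous_norm continuous_const).inter
    (isOpen_lt continuous_const (continuous_lastCoord N))).measurableSet

lemma lintegral_rpow_norm_ball_lt_top (N : ℕ) (hN : 1 ≤ N) {p R : ℝ}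
    (hp : -(N:ℝ) < p) (hR : 0 < R) :
    ∫⁻ x in Metric.ball (0 : Euc N) R, ENNReal.ofReal (‖x‖ ^ p) < ⊤ := by
  haveI : Nonempty (Fin N) := ⟨⟨0, by omega⟩⟩
  haveI : Nontrivial (Euc N) := inferInstance
  have hfr : Module.finrank ℝ (Euc N) = N := by simp [finrank_euclideanSpace]
  rcases le_or_gt 0 p with hp0 | hp0
  · calc ∫⁻ x in Metric.ball (0:Euc N) R, ENNReal.ofReal (‖x‖^p)
        ≤ ∫⁻ _x in Metric.ball (0:Euc N) R, ENNReal.ofReal (R^p) := by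
          refine setLIntegral_mono measurable_const fun x hx => ?_
          exact ENNReal.ofReal_le_ofReal
            (Real.rpow_le_rpow (norm_nonneg _) (mem_ball_zero_iff.1 hx).le hp0)
      _ = ENNReal.ofReal (R^p) * volume (Metric.ball (0:Euc N) R) := setLIntegral_const _ _
      _ < ⊤ := ENNReal.mul_lt_top ENNReal.ofReal_lt_top measure_ball_lt_top
  · set c := volume (Metric.ball (0:Euc N) 1) with hc
    have hcfin : c < ⊤ := measure_ball_lt_top
    set S : ℕ → Set (Euc N) := fun k => {x | R/2^(k+1) ≤ ‖x‖} ∩ Metric.ball 0 (R/2^k) with hS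
    have hcover : Metric.ball (0:Euc N) R ⊆ {(0:Euc N)} ∪ ⋃ k, S k := by
      intro x hx
      rcases eq_or_ne x 0 with h0 | h0
      · left; simp [h0]
      · right
        have hxn : 0 < ‖x‖ := norm_pos_iff.2 h0
        have hex : ∃ k : ℕ, R/2^(k+1) ≤ ‖x‖ := by
          obtain ⟨k, hk⟩ := pow_unbounded_of_one_lt (R/‖x‖) (one_lt_two (α := ℝ))
          refine ⟨k, ?_⟩
          rw [div_le_iff₀ (by positivity)]
          rw [div_lt_iff₀ hxn] at hk
          have h2 : (2:ℝ)^k ≤ 2^(k+1) := by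
            apply pow_le_pow_right₀ (by norm_num); omega
          nlinarith [norm_nonneg x]
        have hk := Nat.find_spec hex
        refine mem_iUnion.2 ⟨Nat.find hex, hk, ?_⟩
        rw [Metric.mem_ball, dist_zero_right]
        rcases Nat.eq_zero_or_pos (Nat.find hex) with h | h
        · rw [h]; simpa using (mem_ball_zero_iff.1 hx)
        · have hmin := Nat.find_min hex (Nat.sub_lt h one_pos)
          rw [not_le] at hmin
          have e : Nat.find hex - 1 + 1 = Nat.find hex := by omega
          rw [e] at hmin
          exact hmin
    have hterm : ∀ k : ℕ, (∫⁻ x in S k, ENNReal.ofReal (‖x‖ ^ p)) ≤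
        ENNReal.ofReal ((R/2^(k+1))^p * (R/2^k)^N) * c := by
      intro k
      calc (∫⁻ x in S k, ENNReal.ofReal (‖x‖ ^ p))
          ≤ ∫⁻ _x in S k, ENNReal.ofReal ((R/2^(k+1))^p) := by
            refine setLIntegral_mono measurable_const fun x hx => ?_
            exact ENNReal.ofReal_le_ofReal
              (Real.rpow_le_rpow_of_nonpos (by positivity) hx.1 hp0.le)
        _ = ENNReal.ofReal ((R/2^(k+1))^p) * volume (S k) := setLIntegral_const _ _
        _ ≤ ENNReal.ofReal ((R/2^(k+1))^p) * volume (Metric.ball (0:Euc N) (R/2^k)) := by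
            exact mul_le_mul_right (measure_mono inter_subset_right) _
        _ = ENNReal.ofReal ((R/2^(k+1))^p) * (ENNReal.ofReal ((R/2^k)^N) * c) := by
            rw [Measure.addHaar_ball volume 0 (by positivity), hfr]
        _ = ENNReal.ofReal ((R/2^(k+1))^p * (R/2^k)^N) * c := by
            rw [ENNReal.ofReal_mul (by positivity), mul_assoc]
    set g : ℕ → ℝ := fun k => (R/2^(k+1))^p * (R/2^k)^N with hg
    have hgnn : ∀ k, 0 ≤ g k := fun k => by positivity
    have hgsum : Summable g := by
      apply summable_of_ratio_norm_eventually_le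
        (r := (2:ℝ)^(-(p+(N:ℝ))))
        (Real.rpow_lt_one_of_one_lt_of_neg one_lt_two (by push_cast; linarith))
      filter_upwards with k
      have e1 : R / 2^(k+1+1) = (R/2^(k+1)) * 2⁻¹ := by ring
      have e2 : R / 2^(k+1) = (R/2^k) * 2⁻¹ := by ring
      have key : g (k+1) = (2:ℝ)^(-(p+(N:ℝ))) * g k := by
        have h1 : (R / 2^(k+1+1))^p = (R/2^(k+1))^p * (2⁻¹:ℝ)^p := by
          rw [e1, Real.mul_rpow (by positivity) (by norm_num)]
        have h2 : (R / 2^(k+1))^N = (R/2^k)^N * (2⁻¹:ℝ)^N := by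
          rw [e2, mul_pow]
        have h3 : (2⁻¹:ℝ)^p * (2⁻¹:ℝ)^(N:ℕ) = (2:ℝ)^(-(p+(N:ℝ))) := by
          rw [Real.inv_rpow (by norm_num), ← Real.rpow_neg (by norm_num),
            inv_pow, ← Real.rpow_natCast (2:ℝ) N, ← Real.rpow_neg (by norm_num),
            ← Real.rpow_add (by norm_num), neg_add]
        simp only [hg]
        rw [h1, h2, ← h3]; ring
      rw [key, Real.norm_eq_abs, Real.norm_eq_abs, abs_of_nonneg (hgnn k),
        abs_of_nonneg (by positivity)]
    calc ∫⁻ x in Metric.ball (0:Euc N) R, ENNReal.ofReal (‖x‖ ^ p)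
        ≤ ∫⁻ x in ({(0:Euc N)} ∪ ⋃ k, S k), ENNReal.ofReal (‖x‖ ^ p) :=
          lintegral_mono_set hcover
      _ ≤ (∫⁻ x in ({(0:Euc N)} : Set (Euc N)), ENNReal.ofReal (‖x‖ ^ p))
            + ∫⁻ x in (⋃ k, S k), ENNReal.ofReal (‖x‖ ^ p) := lintegral_union_le _ _ _
      _ ≤ 0 + ∑' k, ∫⁻ x in S k, ENNReal.ofReal (‖x‖ ^ p) := by
          gcongr
          · exact le_of_eq (setLIntegral_measure_zero _ _ (measure_singleton 0))
          · exact lintegral_iUnion_le _ _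
      _ ≤ ∑' k, ENNReal.ofReal (g k) * c := by
          rw [zero_add]; exact ENNReal.tsum_le_tsum hterm
      _ = (∑' k, ENNReal.ofReal (g k)) * c := ENNReal.tsum_mul_right
      _ = ENNReal.ofReal (∑' k, g k) * c := by
          rw [ENNReal.ofReal_tsum_of_nonneg hgnn hgsum]
      _ < ⊤ := ENNReal.mul_lt_top ENNReal.ofReal_lt_top hcfin

/-- equality case in the Hardy–Littlewood comparison lemma: if
`μ_{l',α}(M) = μ_{l',α}(M⋆)` where `M⋆ = B_R^+` has the same `μ_{l,α}`-measure as `M`,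
then `M` coincides with the half-ball up to a `μ_{l,α}`-null set. -/
theorem wMeas_ratio_equality_rigidity
    (N : ℕ) (hN : 2 ≤ N) (α l l' : ℝ) (hα : 0 < α)
    (hl' : -(N : ℝ) - α < l') (hll' : l' < l)
    (M : Set (Euc N)) (hMmeas : MeasurableSet M) (hMsub : M ⊆ upperHalf N)
    (hM0 : 0 < wMeas N l α M) (hMfin : wMeas N l α M < ⊤)
    (R : ℝ) (hR : 0 < R) (hRstar : wMeas N l α (halfBall N R) = wMeas N l α M)
    (heq : wMeas N l' α M = wMeas N l' α (halfBall N R)) :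
    wMeas N l α (symmDiff M (halfBall N R)) = 0 := by
  set B := halfBall N R with hB
  have hBmeas := measurableSet_halfBall N R
  have hBsub : B ⊆ upperHalf N := fun x hx => hx.2
  have hnormpos : ∀ x ∈ upperHalf N, 0 < ‖x‖ := fun x hx =>
    lt_of_lt_of_le hx ((le_abs_self _).trans (abs_lastCoord_le_norm x))
  have hwtpos : ∀ (k : ℝ), ∀ x ∈ upperHalf N, 0 < wt N k α x := fun k x hx =>
    mul_pos (Real.rpow_pos_of_pos (hnormpos x hx) _) (Real.rpow_pos_of_pos hx _)
  have hratio : ∀ x ∈ upperHalf N, wt N l' α x = ‖x‖ ^ (l' - l) * wt N l α x := by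
    intro x hx
    unfold wt
    rw [← mul_assoc, ← Real.rpow_add (hnormpos x hx)]
    have e : l' - l + l = l' := by ring
    rw [e]
  -- withDensity representation
  set ν : ℝ → Measure (Euc N) :=
    fun k => volume.withDensity (fun x : Euc N => ENNReal.ofReal (wt N k α x)) with hν
  have hw : ∀ (k : ℝ) (S : Set (Euc N)), MeasurableSet S → wMeas N k α S = ν k S :=
    fun k S hS => (withDensity_apply _ hS).symm
  -- finiteness of the l' measure of the half ball
  have hB'fin : wMeas N l' α B < ⊤ := by
    have hsub2 : B ⊆ Metric.ball (0 : Euc N) R := fun x hx => mem_ball_zero_iff.2 hx.1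
    have hmono : ∫⁻ x in B, ENNReal.ofReal (wt N l' α x) ≤
        ∫⁻ x in B, ENNReal.ofReal (‖x‖ ^ (l' + α)) := by
      refine setLIntegral_mono (by fun_prop) fun x hx => ?_
      refine ENNReal.ofReal_le_ofReal ?_
      have hup := hBsub hx
      have h1 : lastCoord N x ^ α ≤ ‖x‖ ^ α :=
        Real.rpow_le_rpow (le_of_lt hup)
          ((le_abs_self _).trans (abs_lastCoord_le_norm x)) hα.le
      calc wt N l' α x ≤ ‖x‖ ^ l' * ‖x‖ ^ α :=
            mul_le_mul_of_nonneg_left h1 (Real.rpow_nonneg (norm_nonneg _) _)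
        _ = ‖x‖ ^ (l' + α) := (Real.rpow_add (hnormpos x hup) _ _).symm
    calc wMeas N l' α B ≤ ∫⁻ x in B, ENNReal.ofReal (‖x‖ ^ (l' + α)) := hmono
      _ ≤ ∫⁻ x in Metric.ball (0 : Euc N) R, ENNReal.ofReal (‖x‖ ^ (l' + α)) :=
          lintegral_mono_set hsub2
      _ < ⊤ := lintegral_rpow_norm_ball_lt_top N (by omega) (by linarith) hR
  have hBlfin : wMeas N l α B < ⊤ := hRstar ▸ hMfin
  -- cancellation: same measure of the two "lunes"
  have hcancel : ∀ k : ℝ, wMeas N k α M = wMeas N k α B → wMeas N k α (M ∩ B) ≠ ⊤ →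
      ν k (M \ B) = ν k (B \ M) := by
    intro k hk hfin
    have h1 : ν k (M ∩ B) + ν k (M \ B) = ν k M := measure_inter_add_diff M hBmeas
    have h2 : ν k (M ∩ B) + ν k (B \ M) = ν k B := by
      rw [inter_comm]; exact measure_inter_add_diff B hMmeas
    have hMB : ν k M = ν k B := by
      rw [← hw k M hMmeas, ← hw k B hBmeas]; exact hk
    rw [hw k _ (hMmeas.inter hBmeas)] at hfin
    have := h1.trans (hMB.trans h2.symm)
    exact (ENNReal.add_right_inj hfin).1 this
  -- measure monotonicity through ν
  have hmono : ∀ (k : ℝ) (S T : Set (Euc N)), MeasurableSet S → MeasurableSet T → S ⊆ T →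
      wMeas N k α S ≤ wMeas N k α T := by
    intro k S T hS hT hsub
    rw [hw k S hS, hw k T hT]
    exact measure_mono hsub
  have h1 : ν l (M \ B) = ν l (B \ M) :=
    hcancel l hRstar.symm (((hmono l _ M (hMmeas.inter hBmeas) hMmeas
      inter_subset_left).trans_lt hMfin).ne)
  have h2 : ν l' (M \ B) = ν l' (B \ M) :=
    hcancel l' heq (((hmono l' _ B (hMmeas.inter hBmeas) hBmeas
      inter_subset_right).trans_lt hB'fin).ne)
  -- inequality on M \ B
  have hAineq : wMeas N l' α (M \ B) ≤ ENNReal.ofReal (R ^ (l' - l)) * wMeas N l α (M \ B) := by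
    calc wMeas N l' α (M \ B)
        ≤ ∫⁻ x in M \ B, ENNReal.ofReal (R ^ (l' - l)) * ENNReal.ofReal (wt N l α x) := by
          refine setLIntegral_mono (measurable_const.mul (measurable_wtE N l α)) fun x hx => ?_
          have hup := hMsub hx.1
          have hge : R ≤ ‖x‖ := by
            by_contra hlt
            exact hx.2 ⟨not_le.1 hlt, hup⟩
          have hle : ‖x‖ ^ (l' - l) ≤ R ^ (l' - l) :=
            Real.rpow_le_rpow_of_nonpos hR hge (by linarith)
          rw [hratio x hup, ← ENNReal.ofReal_mul (Real.rpow_nonneg hR.le _)]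
          exact ENNReal.ofReal_le_ofReal
            (mul_le_mul_of_nonneg_right hle (hwtpos l x hup).le)
      _ = ENNReal.ofReal (R ^ (l' - l)) * wMeas N l α (M \ B) :=
          lintegral_const_mul _ (measurable_wtE N l α)
  -- strict inequality on B \ M, assuming positive measure
  have hCzero : wMeas N l α (B \ M) = 0 := by
    by_contra hC0
    have hvol : volume (B \ M) ≠ 0 := by
      intro hv
      exact hC0 (setLIntegral_measure_zero _ _ hv)
    have hCfin : wMeas N l α (B \ M) < ⊤ :=
      (hmono l _ B (hBmeas.diff hMmeas) hBmeas diff_subset).trans_lt hBlfin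
    have hstrict : ∫⁻ x in B \ M, ENNReal.ofReal (R ^ (l' - l)) * ENNReal.ofReal (wt N l α x)
        < ∫⁻ x in B \ M, ENNReal.ofReal (wt N l' α x) := by
      refine setLIntegral_strict_mono (hBmeas.diff hMmeas) hvol (measurable_wtE N l' α) ?_ ?_
      · rw [lintegral_const_mul _ (measurable_wtE N l α)]
        exact (ENNReal.mul_lt_top ENNReal.ofReal_lt_top hCfin).ne
      · filter_upwards with x hx
        have hup := hBsub hx.1
        have hlt : R ^ (l' - l) < ‖x‖ ^ (l' - l) :=
          Real.rpow_lt_rpow_of_neg (hnormpos x hup) hx.1.1 (by linarith)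
        rw [← ENNReal.ofReal_mul (Real.rpow_nonneg hR.le _)]
        exact (ENNReal.ofReal_lt_ofReal_iff (hwtpos l' x hup)).2
          (by rw [hratio x hup]; exact mul_lt_mul_of_pos_right hlt (hwtpos l x hup))
    rw [lintegral_const_mul _ (measurable_wtE N l α)] at hstrict
    have hchain : wMeas N l' α (B \ M) < wMeas N l' α (B \ M) := by
      calc wMeas N l' α (B \ M)
          = wMeas N l' α (M \ B) := by
            rw [hw l' _ (hBmeas.diff hMmeas), hw l' _ (hMmeas.diff hBmeas)]; exact h2.symm
        _ ≤ ENNReal.ofReal (R ^ (l' - l)) * wMeas N l α (M \ B) := hAineq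
        _ = ENNReal.ofReal (R ^ (l' - l)) * wMeas N l α (B \ M) := by
            rw [hw l _ (hMmeas.diff hBmeas), hw l _ (hBmeas.diff hMmeas)]; exact congrArg _ h1
        _ < wMeas N l' α (B \ M) := hstrict
    exact lt_irrefl _ hchain
  have hAzero : wMeas N l α (M \ B) = 0 := by
    rw [hw l _ (hMmeas.diff hBmeas), h1, ← hw l _ (hBmeas.diff hMmeas)]
    exact hCzero
  have hsymm : MeasurableSet (symmDiff M B) := (hMmeas.diff hBmeas).union (hBmeas.diff hMmeas)
  rw [hw l _ hsymm]
  have hle : ν l (symmDiff M B) ≤ ν l (M \ B) + ν l (B \ M) := by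
    rw [Set.symmDiff_def]
    exact measure_union_le _ _
  rw [← hw l _ (hMmeas.diff hBmeas), ← hw l _ (hBmeas.diff hMmeas), hAzero, hCzero] at hle
  simpa using hle


end
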